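/- Discrete small-divisor estimate for splitting methods under the cutoff K ≤ π/3 (key claim in the proof of the normal form Theorem 4.2): Let ω : N → ℝ, ℓ ≥ 3, and assume that for each r ∈ {ℓ−2, ℓ−1, ℓ} there exist γ_r > 0 and α_r ≥ 0 such that |Ω(k)| ≥ γ_r · μ(k)^{−α_r} for every k ∈ Z^r with k ∉ A_r. Let h > 0, let 0 < K ≤ π/3, set Λ = K/h, and assume ω_0 ≤ Λ. Let j = (j_1,…,j_ℓ) ∈ I_ℓ with j ∉ A_ℓ be a zero-moment multi-index having at most two components with ω_{a_i} > Λ (in the case of exactly two such components j_p and j_q, assume δ_p = −δ_q), and suppose that h·|ω^Λ_{a_i}| ≤ K for every i and that h·|ω^Λ_{a_i}| ≤ K/(ℓ−2) for all but at most two indices i. Then |exp(i h Ω^Λ(j)) − 1| ≥ (2γ/π) · h · μ(j)^{−α}, where γ = min(γ_ℓ, γ_{ℓ−1}, γ_{ℓ−2}) and α = max(α_ℓ, α_{ℓ−1}, α_{ℓ−2}). -/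

import Mathlib

open scoped BigOperators

/-- The index set `Z = ℤ^d × {±1}`; the sign `δ = ±1` is encoded by a `Bool`
(`true ↦ +1`, `false ↦ -1`). -/
abbrev Idx (d : ℕ) := (Fin d → ℤ) × Bool

/-- The sign associated with a boolean. -/
def sgn (b : Bool) : ℤ := if b then 1 else -1

/-- Conjugation `(a, δ) ↦ (a, -δ)`. -/
def conjIdx {d : ℕ} (j : Idx d) : Idx d := (j.1, !j.2)

/-- `|j| = max(1, ‖a‖)` with `‖a‖` the Euclidean norm of `a ∈ ℤ^d`. -/
noncomputable def absIdx {d : ℕ} (j : Idx d) : ℝ :=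
  max 1 (Real.sqrt (∑ i, ((j.1 i : ℝ)) ^ 2))

/-- The moment `M(j) = δ₁ a₁ + ⋯ + δ_ℓ a_ℓ ∈ ℤ^d` of a multi-index. -/
def moment {d ℓ : ℕ} (j : Fin ℓ → Idx d) : Fin d → ℤ :=
  ∑ i, sgn (j i).2 • (j i).1

/-- `Ω(j) = δ₁ ω_{a₁} + ⋯ + δ_ℓ ω_{a_ℓ}`. -/
def bigOmega {d ℓ : ℕ} (ω : (Fin d → ℤ) → ℝ) (j : Fin ℓ → Idx d) : ℝ :=
  ∑ i, (sgn (j i).2 : ℝ) * ω (j i).1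

/-- `j ∈ A_ℓ` : the multi-index depends only on the actions, i.e. `ℓ` is even and `j`
is a permutation of `((b₁,1),…,(b_{ℓ/2},1),(b₁,-1),…,(b_{ℓ/2},-1))`. -/
def dependsOnActions {d ℓ : ℕ} (j : Fin ℓ → Idx d) : Prop :=
  ∃ (m : ℕ) (b : Fin m → (Fin d → ℤ)), ℓ = 2 * m ∧
    Finset.univ.val.map j =
      Finset.univ.val.map (fun i => ((b i, true) : Idx d)) +
        Finset.univ.val.map (fun i => ((b i, false) : Idx d))

/-- `μ(j)`: the third largest element of `(|j₁|,…,|j_ℓ|)` (and `1` when `ℓ < 3`). -/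
noncomputable def mu {d ℓ : ℕ} (j : Fin ℓ → Idx d) : ℝ :=
  ((List.ofFn fun i => absIdx (j i)).insertionSort (· ≥ ·)).getD 2 1

/-- Truncated frequencies: `ω^Λ_a = ω_a` if `ω_a ≤ Λ`, and `0` otherwise. -/
noncomputable def truncFreq {d : ℕ} (ω : (Fin d → ℤ) → ℝ) (Λ : ℝ) (a : Fin d → ℤ) : ℝ :=
  if ω a ≤ Λ then ω a else 0

/-!
Deleting the (at most two) indices with `ω_a > Λ` turns `Ω^Λ(j)` into `Ω(k)` for a multi-index
`k` of length `ℓ`, `ℓ - 1` or `ℓ - 2` with `μ(k) ≤ μ(j)`. The zero moment keeps `k` outside `A`: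
a single deleted index would have `a = 0`, which `ω_0 ≤ Λ` excludes, and two deleted indices of
opposite signs are then conjugate, so `k ∈ A` would give `j ∈ A`. Hence
`|Ω^Λ(j)| ≥ γ μ(j)^{-α}`. The smallness assumptions give `h |Ω^Λ(j)| ≤ 3K ≤ π`, and on `[-π, π]`
Jordan's inequality gives `|e^{iθ} - 1| = 2 |sin (θ/2)| ≥ 2|θ|/π`.
-/

open Finset

namespace List

theorem getD_le_getD_of_sublist {α : Type*} [LinearOrder α] {l₁ l₂ : List α} {d : α}
    (h : l₁ <+ l₂) (hs : l₂.Pairwise (· ≥ ·)) (hd : ∀ x ∈ l₂, d ≤ x) (n : ℕ) :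
    l₁.getD n d ≤ l₂.getD n d := by
  simp only [getD_eq_getElem?_getD, ← head?_drop]
  have hsub := h.drop n
  have hs' : (l₂.drop n).Pairwise (· ≥ ·) := hs.sublist (drop_sublist n l₂)
  have hd' : ∀ x ∈ l₂.drop n, d ≤ x := fun x hx => hd x (mem_of_mem_drop hx)
  generalize l₁.drop n = s₁ at hsub
  generalize l₂.drop n = s₂ at hsub hs' hd'
  rcases s₂ with _ | ⟨b, t⟩
  · simp [sublist_nil.mp hsub]
  rcases s₁ with _ | ⟨a, t'⟩
  · simpa using hd' b mem_cons_self
  rcases mem_cons.mp (hsub.subset mem_cons_self) with rfl | hat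
  · rfl
  · simpa using (pairwise_cons.mp hs').1 a hat

end List

lemma Finset.sum_le_mul_of_le_off {ι : Type*} [Fintype ι] {x : ι → ℝ} {K : ℝ} {m : ℕ}
    (hm : m < Fintype.card ι) (hx : ∀ i, x i ≤ K) {T : Finset ι} (hT : #T ≤ m)
    (hTc : ∀ i ∉ T, x i ≤ K / (Fintype.card ι - m)) :
    ∑ i, x i ≤ (m + 1) * K := by
  classical
  -- enlarging `T` to exactly `m` elements leaves `card ι - m` terms of size `K / (card ι - m)`
  obtain ⟨U, hTU, -, hU⟩ := exists_subsuperset_card_eq (subset_univ T) hT hm.le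
  have hUc : (#Uᶜ : ℝ) = Fintype.card ι - m := by
    rw [card_compl, hU, Nat.cast_sub hm.le]
  have hpos : (0 : ℝ) < Fintype.card ι - m := by
    rw [sub_pos]; exact_mod_cast hm
  calc ∑ i, x i = ∑ i ∈ U, x i + ∑ i ∈ Uᶜ, x i := (sum_add_sum_compl U x).symm
    _ ≤ #U • K + #Uᶜ • (K / (Fintype.card ι - m)) :=
        add_le_add (sum_le_card_nsmul _ _ _ fun i _ => hx i)
          (sum_le_card_nsmul _ _ _ fun i hi => hTc i fun h => mem_compl.mp hi (hTU h))
    _ = (m + 1) * K := by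
        rw [nsmul_eq_mul, nsmul_eq_mul, hUc, hU, mul_div_cancel₀ _ hpos.ne']
        ring

lemma Complex.mul_abs_le_norm_exp_ofReal_mul_I_sub_one {θ : ℝ} (hθ : |θ| ≤ Real.pi) :
    2 / Real.pi * |θ| ≤ ‖exp (θ * I) - 1‖ := by
  have hθ2 : |θ / 2| ≤ Real.pi / 2 := by rw [abs_div, abs_two]; linarith
  rw [mul_comm (θ : ℂ) I, norm_exp_I_mul_ofReal_sub_one, norm_mul, Real.norm_eq_abs,
    Real.norm_eq_abs, abs_two]
  calc 2 / Real.pi * |θ| = 2 * (2 / Real.pi * |θ / 2|) := by rw [abs_div, abs_two]; ring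
    _ ≤ 2 * |Real.sin (θ / 2)| := by gcongr; exact Real.mul_abs_le_abs_sin hθ2

lemma Fin.univ_val_map_eq_cons_succAbove {β : Type*} {n : ℕ} (f : Fin (n + 1) → β)
    (p : Fin (n + 1)) : univ.val.map f = f p ::ₘ univ.val.map (f ∘ p.succAbove) := by
  rw [Fin.univ_succAbove _ p]
  simp only [cons_val, map_val, Multiset.map_cons, Multiset.map_map, Fin.coe_succAboveEmb]

section

variable {d : ℕ}

lemma one_le_absIdx (j : Idx d) : 1 ≤ absIdx j := le_max_left _ _

lemma one_le_mu {ℓ : ℕ} (j : Fin ℓ → Idx d) : 1 ≤ mu j := by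
  rw [mu, List.getD_eq_getElem?_getD]
  cases h : (List.insertionSort (· ≥ ·) (List.ofFn fun i => absIdx (j i)))[2]? with
  | none => rfl
  | some x =>
    obtain ⟨i, rfl⟩ := List.mem_ofFn.mp ((List.mem_insertionSort _).mp (List.mem_of_getElem? h))
    exact one_le_absIdx _

lemma mu_le_mu_of_subperm {m n : ℕ} {k : Fin m → Idx d} {j : Fin n → Idx d}
    (h : (List.ofFn fun i => absIdx (k i)).Subperm (List.ofFn fun i => absIdx (j i))) :
    mu k ≤ mu j := by
  refine List.getD_le_getD_of_sublist ?_ (List.pairwise_insertionSort _ _) ?_ 2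
  · refine List.sublist_of_subperm_of_pairwise ?_ (List.pairwise_insertionSort _ _)
      (List.pairwise_insertionSort _ _)
    exact (List.perm_insertionSort _ _).subperm.trans
      (h.trans (List.perm_insertionSort _ _).symm.subperm)
  · intro x hx
    obtain ⟨i, rfl⟩ := List.mem_ofFn.mp ((List.mem_insertionSort _).mp hx)
    exact one_le_absIdx _

lemma mu_comp_succAbove_le {n : ℕ} (j : Fin (n + 1) → Idx d) (p : Fin (n + 1)) :
    mu (j ∘ p.succAbove) ≤ mu j := by
  refine mu_le_mu_of_subperm ?_
  rw [← Multiset.coe_le, ← Fin.univ_val_map, ← Fin.univ_val_map,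
    Fin.univ_val_map_eq_cons_succAbove _ p]
  exact Multiset.le_cons_self _ _

lemma sgn_not (b : Bool) : sgn (!b) = -sgn b := by cases b <;> rfl

lemma sgn_ne_zero (b : Bool) : sgn b ≠ 0 := by cases b <;> decide

lemma abs_sgn (b : Bool) : |(sgn b : ℝ)| = 1 := by cases b <;> simp [sgn]

lemma moment_eq_add_comp_succAbove {n : ℕ} (j : Fin (n + 1) → Idx d) (p : Fin (n + 1)) :
    moment j = sgn (j p).2 • (j p).1 + moment (j ∘ p.succAbove) :=
  Fin.sum_univ_succAbove _ p

lemma bigOmega_eq_add_comp_succAbove {n : ℕ} (ν : (Fin d → ℤ) → ℝ) (j : Fin (n + 1) → Idx d)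
    (p : Fin (n + 1)) :
    bigOmega ν j = sgn (j p).2 * ν (j p).1 + bigOmega ν (j ∘ p.succAbove) :=
  Fin.sum_univ_succAbove _ p

lemma bigOmega_comp_succAbove_of_eq_zero {n : ℕ} {ν : (Fin d → ℤ) → ℝ}
    {j : Fin (n + 1) → Idx d} {p : Fin (n + 1)} (hp : ν (j p).1 = 0) :
    bigOmega ν (j ∘ p.succAbove) = bigOmega ν j := by
  rw [bigOmega_eq_add_comp_succAbove ν j p, hp, mul_zero, zero_add]

lemma abs_bigOmega_le {ℓ : ℕ} (ν : (Fin d → ℤ) → ℝ) (j : Fin ℓ → Idx d) :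
    |bigOmega ν j| ≤ ∑ i, |ν (j i).1| :=
  (abs_sum_le_sum_abs _ _).trans_eq <| sum_congr rfl fun i _ => by rw [abs_mul, abs_sgn, one_mul]

lemma truncFreq_of_le {ω : (Fin d → ℤ) → ℝ} {Λ : ℝ} {a : Fin d → ℤ} (h : ω a ≤ Λ) :
    truncFreq ω Λ a = ω a := if_pos h

lemma truncFreq_of_lt {ω : (Fin d → ℤ) → ℝ} {Λ : ℝ} {a : Fin d → ℤ} (h : Λ < ω a) :
    truncFreq ω Λ a = 0 := if_neg h.not_ge

lemma bigOmega_truncFreq_of_forall_le {ℓ : ℕ} {ω : (Fin d → ℤ) → ℝ} {Λ : ℝ}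
    {j : Fin ℓ → Idx d} (h : ∀ i, ω (j i).1 ≤ Λ) :
    bigOmega (truncFreq ω Λ) j = bigOmega ω j :=
  sum_congr rfl fun i _ => by rw [truncFreq_of_le (h i)]

lemma moment_eq_zero_of_dependsOnActions {ℓ : ℕ} {j : Fin ℓ → Idx d}
    (hj : dependsOnActions j) : moment j = 0 := by
  obtain ⟨m, b, -, hj⟩ := hj
  have : moment j = ((univ.val.map j).map fun x : Idx d => sgn x.2 • x.1).sum := by
    rw [Multiset.map_map]; rfl
  rw [this, hj, Multiset.map_add, Multiset.sum_add, Multiset.map_map, Multiset.map_map]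
  change ∑ i, sgn true • b i + ∑ i, sgn false • b i = 0
  simp [sgn]

lemma eq_conjIdx_of_sgn_smul_add_eq_zero {x y : Idx d} (hxy : x.2 = !y.2)
    (h : sgn x.2 • x.1 + sgn y.2 • y.1 = 0) : x = conjIdx y := by
  rw [hxy, sgn_not, neg_smul, neg_add_eq_zero, ← sub_eq_zero, ← smul_sub] at h
  exact Prod.ext (sub_eq_zero.mp ((smul_eq_zero.mp h).resolve_left (sgn_ne_zero _))) hxy

lemma dependsOnActions_of_map_eq_cons {n : ℕ} {k : Fin n → Idx d} (hk : dependsOnActions k)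
    {j : Fin (n + 2) → Idx d} (x : Idx d)
    (hj : univ.val.map j = conjIdx x ::ₘ x ::ₘ univ.val.map k) : dependsOnActions j := by
  obtain ⟨m, b, hm, hk⟩ := hk
  set b' : Fin (m + 1) → Fin d → ℤ := Fin.cons x.1 b
  have hcons (c : Bool) : univ.val.map (fun i => (b' i, c)) =
      (x.1, c) ::ₘ univ.val.map (fun i => (b i, c)) := by
    simp [b', Fin.univ_val_map_eq_cons_succAbove _ 0, Function.comp_def]
  refine ⟨m + 1, b', by omega, ?_⟩
  rw [hj, hk, hcons, hcons, Multiset.cons_add, Multiset.add_cons]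
  obtain ⟨a, _ | _⟩ := x
  · rfl
  · exact Multiset.cons_swap _ _ _

lemma not_dependsOnActions_comp_succAbove {n : ℕ} {j : Fin (n + 1) → Idx d}
    (hmom : moment j = 0) {p : Fin (n + 1)} (hp : (j p).1 ≠ 0) :
    ¬ dependsOnActions (j ∘ p.succAbove) := fun hk => by
  rw [moment_eq_add_comp_succAbove j p, moment_eq_zero_of_dependsOnActions hk, add_zero,
    smul_eq_zero] at hmom
  exact hmom.elim (sgn_ne_zero _) hp

lemma not_dependsOnActions_comp_succAbove_succAbove {n : ℕ} {j : Fin (n + 2) → Idx d}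
    (hmom : moment j = 0) (hA : ¬ dependsOnActions j) (p : Fin (n + 2)) (q : Fin (n + 1))
    (hpq : (j p).2 = !(j (p.succAbove q)).2) :
    ¬ dependsOnActions ((j ∘ p.succAbove) ∘ q.succAbove) := fun hk => by
  rw [moment_eq_add_comp_succAbove j p, moment_eq_add_comp_succAbove _ q,
    moment_eq_zero_of_dependsOnActions hk, add_zero] at hmom
  have hconj := eq_conjIdx_of_sgn_smul_add_eq_zero hpq hmom
  refine hA (dependsOnActions_of_map_eq_cons hk (j (p.succAbove q)) ?_)
  rw [Fin.univ_val_map_eq_cons_succAbove j p, Fin.univ_val_map_eq_cons_succAbove _ q, hconj]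
  rfl

def NonResonant (ω : (Fin d → ℤ) → ℝ) (r : ℕ) (γ α : ℝ) : Prop :=
  ∀ k : Fin r → Idx d, ¬ dependsOnActions k → γ * mu k ^ (-α) ≤ |bigOmega ω k|

namespace NonResonant

variable {r : ℕ} {ω : (Fin d → ℤ) → ℝ} {γ α : ℝ}

lemma mono (hres : NonResonant ω r γ α) {γ' α' : ℝ} (hγ' : 0 ≤ γ') (hγ : γ' ≤ γ)
    (hα : α ≤ α') : NonResonant ω r γ' α' := fun k hk =>
  calc γ' * mu k ^ (-α') ≤ γ * mu k ^ (-α) :=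
        mul_le_mul hγ (Real.rpow_le_rpow_of_exponent_le (one_le_mu k) (neg_le_neg hα))
          (Real.rpow_nonneg (zero_le_one.trans (one_le_mu k)) _) (hγ'.trans hγ)
    _ ≤ |bigOmega ω k| := hres k hk

lemma le_of_mu_le (hres : NonResonant ω r γ α) (hγ : 0 ≤ γ) (hα : 0 ≤ α)
    {k : Fin r → Idx d} (hk : ¬ dependsOnActions k) {μ : ℝ} (hμ : mu k ≤ μ) :
    γ * μ ^ (-α) ≤ |bigOmega ω k| :=
  calc γ * μ ^ (-α) ≤ γ * mu k ^ (-α) := mul_le_mul_of_nonneg_left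
        (Real.rpow_le_rpow_of_nonpos (zero_lt_one.trans_le (one_le_mu k)) hμ (neg_nonpos.mpr hα)) hγ
    _ ≤ |bigOmega ω k| := hres k hk

end NonResonant

variable {n : ℕ} {ω : (Fin d → ℤ) → ℝ} {Λ γ α : ℝ}

lemma le_abs_bigOmega_truncFreq_of_unique_gt (hres : NonResonant ω n γ α) (hγ : 0 ≤ γ)
    (hα : 0 ≤ α) (hω0 : ω 0 ≤ Λ) {j : Fin (n + 1) → Idx d} (hmom : moment j = 0)
    {p : Fin (n + 1)} (hbig : ∀ i, Λ < ω (j i).1 ↔ i = p) :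
    γ * mu j ^ (-α) ≤ |bigOmega (truncFreq ω Λ) j| := by
  have hp : Λ < ω (j p).1 := (hbig p).mpr rfl
  have hrest : ∀ i, ω ((j ∘ p.succAbove) i).1 ≤ Λ := fun i =>
    not_lt.mp fun h => p.succAbove_ne i ((hbig _).mp h)
  have hp0 : (j p).1 ≠ 0 := fun h => by rw [h] at hp; exact hω0.not_gt hp
  rw [← bigOmega_comp_succAbove_of_eq_zero (truncFreq_of_lt hp),
    bigOmega_truncFreq_of_forall_le hrest]
  exact hres.le_of_mu_le hγ hα (not_dependsOnActions_comp_succAbove hmom hp0)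
    (mu_comp_succAbove_le j p)

lemma le_abs_bigOmega_truncFreq_of_pair_gt (hres : NonResonant ω n γ α) (hγ : 0 ≤ γ)
    (hα : 0 ≤ α) {j : Fin (n + 2) → Idx d} (hmom : moment j = 0) (hA : ¬ dependsOnActions j)
    {p : Fin (n + 2)} {q : Fin (n + 1)} (hbig : ∀ i, Λ < ω (j i).1 ↔ i = p ∨ i = p.succAbove q)
    (hpq : (j p).2 = !(j (p.succAbove q)).2) :
    γ * mu j ^ (-α) ≤ |bigOmega (truncFreq ω Λ) j| := by
  have hrest : ∀ i, ω (((j ∘ p.succAbove) ∘ q.succAbove) i).1 ≤ Λ := fun i =>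
    not_lt.mp fun h => ((hbig _).mp h).elim (p.succAbove_ne _)
      fun h' => q.succAbove_ne i (p.succAbove_right_injective h')
  rw [← bigOmega_comp_succAbove_of_eq_zero (truncFreq_of_lt ((hbig p).mpr (.inl rfl))),
    ← bigOmega_comp_succAbove_of_eq_zero (p := q) (truncFreq_of_lt ((hbig _).mpr (.inr rfl))),
    bigOmega_truncFreq_of_forall_le hrest]
  exact hres.le_of_mu_le hγ hα (not_dependsOnActions_comp_succAbove_succAbove hmom hA p q hpq)
    ((mu_comp_succAbove_le _ q).trans (mu_comp_succAbove_le j p))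

lemma le_abs_bigOmega_truncFreq (h₀ : NonResonant ω (n + 2) γ α)
    (h₁ : NonResonant ω (n + 1) γ α) (h₂ : NonResonant ω n γ α) (hγ : 0 ≤ γ) (hα : 0 ≤ α)
    (hω0 : ω 0 ≤ Λ) {j : Fin (n + 2) → Idx d} (hmom : moment j = 0) (hA : ¬ dependsOnActions j)
    (hbig : #{i | Λ < ω (j i).1} ≤ 2)
    (hpair : ∀ p q, p ≠ q → Λ < ω (j p).1 → Λ < ω (j q).1 → (j p).2 = !(j q).2) :
    γ * mu j ^ (-α) ≤ |bigOmega (truncFreq ω Λ) j| := by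
  have hmem (i) : Λ < ω (j i).1 ↔ i ∈ ({i | Λ < ω (j i).1} : Finset _) := by simp
  interval_cases hS : #{i | Λ < ω (j i).1}
  · have hle (i) : ω (j i).1 ≤ Λ := not_lt.mp fun h => (card_pos.mpr ⟨i, (hmem i).mp h⟩).ne' hS
    rw [bigOmega_truncFreq_of_forall_le hle]
    exact h₀.le_of_mu_le hγ hα hA le_rfl
  · obtain ⟨p, hp⟩ := card_eq_one.mp hS
    exact le_abs_bigOmega_truncFreq_of_unique_gt h₁ hγ hα hω0 hmom (p := p)
      fun i => by rw [hmem, hp, mem_singleton]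
  · obtain ⟨p, q, hpq, hS⟩ := card_eq_two.mp hS
    obtain ⟨q', rfl⟩ := Fin.exists_succAbove_eq hpq.symm
    have hbig' (i) : Λ < ω (j i).1 ↔ i = p ∨ i = p.succAbove q' := by
      rw [hmem, hS, mem_insert, mem_singleton]
    exact le_abs_bigOmega_truncFreq_of_pair_gt h₂ hγ hα hmom hA hbig'
      (hpair _ _ hpq ((hbig' p).mpr (.inl rfl)) ((hbig' _).mpr (.inr rfl)))

end

theorem discrete_small_divisor_estimate_general
    {d : ℕ} (ω : (Fin d → ℤ) → ℝ) (ℓ : ℕ) (hℓ : 3 ≤ ℓ)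
    (γℓ γℓ1 γℓ2 αℓ αℓ1 αℓ2 : ℝ)
    (hγℓ : 0 < γℓ) (hγℓ1 : 0 < γℓ1) (hγℓ2 : 0 < γℓ2)
    (hαℓ : 0 ≤ αℓ)
    (hresℓ : ∀ k : Fin ℓ → Idx d, ¬ dependsOnActions k →
      γℓ * mu k ^ (-αℓ) ≤ |bigOmega ω k|)
    (hresℓ1 : ∀ k : Fin (ℓ - 1) → Idx d, ¬ dependsOnActions k →
      γℓ1 * mu k ^ (-αℓ1) ≤ |bigOmega ω k|)
    (hresℓ2 : ∀ k : Fin (ℓ - 2) → Idx d, ¬ dependsOnActions k →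
      γℓ2 * mu k ^ (-αℓ2) ≤ |bigOmega ω k|)
    (h K Λ : ℝ) (hh : 0 < h) (hKπ : K ≤ Real.pi / 3)
    (hω0 : ω 0 ≤ Λ)
    (j : Fin ℓ → Idx d) (hmom : moment j = 0) (hA : ¬ dependsOnActions j)
    (hbig : (Finset.univ.filter (fun i => Λ < ω (j i).1)).card ≤ 2)
    (hpair : ∀ p q : Fin ℓ, p ≠ q → Λ < ω (j p).1 → Λ < ω (j q).1 →
      (j p).2 = !(j q).2)
    (hsmall : ∀ i, h * |truncFreq ω Λ (j i).1| ≤ K)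
    (hsmall2 : ∃ T : Finset (Fin ℓ), T.card ≤ 2 ∧
      ∀ i ∉ T, h * |truncFreq ω Λ (j i).1| ≤ K / ((ℓ : ℝ) - 2)) :
    2 * min (min γℓ γℓ1) γℓ2 / Real.pi * h * mu j ^ (-(max (max αℓ αℓ1) αℓ2)) ≤
      ‖Complex.exp ((h : ℂ) * (bigOmega (truncFreq ω Λ) j : ℂ) * Complex.I)
        - 1‖ := by
  obtain ⟨n, rfl⟩ : ∃ n, ℓ = n + 2 := ⟨ℓ - 2, by omega⟩
  set γ := min (min γℓ γℓ1) γℓ2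
  set α := max (max αℓ αℓ1) αℓ2
  set Ω := bigOmega (truncFreq ω Λ) j
  have hγ : 0 ≤ γ := le_min (le_min hγℓ.le hγℓ1.le) hγℓ2.le
  have hlow : γ * mu j ^ (-α) ≤ |Ω| :=
    le_abs_bigOmega_truncFreq
      (NonResonant.mono hresℓ hγ ((min_le_left _ _).trans (min_le_left _ _))
        ((le_max_left _ _).trans (le_max_left _ _)))
      (NonResonant.mono hresℓ1 hγ ((min_le_left _ _).trans (min_le_right _ _))
        ((le_max_right _ _).trans (le_max_left _ _)))
      (NonResonant.mono hresℓ2 hγ (min_le_right _ _) (le_max_right _ _))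
      hγ (hαℓ.trans ((le_max_left _ _).trans (le_max_left _ _))) hω0 hmom hA hbig hpair
  obtain ⟨T, hT, hTc⟩ := hsmall2
  have hup : |h * Ω| ≤ Real.pi :=
    calc |h * Ω| ≤ h * ∑ i, |truncFreq ω Λ (j i).1| := by
          rw [abs_mul, abs_of_pos hh]; exact mul_le_mul_of_nonneg_left (abs_bigOmega_le _ j) hh.le
      _ ≤ (2 + 1) * K := by
          rw [Finset.mul_sum]
          exact_mod_cast Finset.sum_le_mul_of_le_off (m := 2)
            (by rw [Fintype.card_fin]; omega) hsmall hT (by simpa using hTc)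
      _ ≤ Real.pi := by linarith
  calc 2 * γ / Real.pi * h * mu j ^ (-α) = 2 / Real.pi * (h * (γ * mu j ^ (-α))) := by ring
    _ ≤ 2 / Real.pi * |h * Ω| := by
        rw [abs_mul, abs_of_pos hh]; gcongr
    _ ≤ ‖Complex.exp ((h : ℂ) * (Ω : ℂ) * Complex.I) - 1‖ := by
        simpa using Complex.mul_abs_le_norm_exp_ofReal_mul_I_sub_one hup

/-- Discrete small-divisor estimate for splitting methods under the cutoff
`K ≤ π/3`, key claim in the proof of Theorem 4.2. With `Λ = K/h` and `γ, α` as in the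
truncated non-resonance estimate, one has
`|exp(i h Ω^Λ(j)) − 1| ≥ (2γ/π) h μ(j)^{-α}`. -/
theorem discrete_small_divisor_estimate
    {d : ℕ} (hd : 1 ≤ d) (ω : (Fin d → ℤ) → ℝ) (ℓ : ℕ) (hℓ : 3 ≤ ℓ)
    (γℓ γℓ1 γℓ2 αℓ αℓ1 αℓ2 : ℝ)
    (hγℓ : 0 < γℓ) (hγℓ1 : 0 < γℓ1) (hγℓ2 : 0 < γℓ2)
    (hαℓ : 0 ≤ αℓ) (hαℓ1 : 0 ≤ αℓ1) (hαℓ2 : 0 ≤ αℓ2)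
    (hresℓ : ∀ k : Fin ℓ → Idx d, ¬ dependsOnActions k →
      γℓ * mu k ^ (-αℓ) ≤ |bigOmega ω k|)
    (hresℓ1 : ∀ k : Fin (ℓ - 1) → Idx d, ¬ dependsOnActions k →
      γℓ1 * mu k ^ (-αℓ1) ≤ |bigOmega ω k|)
    (hresℓ2 : ∀ k : Fin (ℓ - 2) → Idx d, ¬ dependsOnActions k →
      γℓ2 * mu k ^ (-αℓ2) ≤ |bigOmega ω k|)
    (h K Λ : ℝ) (hh : 0 < h) (hK : 0 < K) (hKπ : K ≤ Real.pi / 3)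
    (hΛ : Λ = K / h) (hω0 : ω 0 ≤ Λ)
    (j : Fin ℓ → Idx d) (hmom : moment j = 0) (hA : ¬ dependsOnActions j)
    (hbig : (Finset.univ.filter (fun i => Λ < ω (j i).1)).card ≤ 2)
    (hpair : ∀ p q : Fin ℓ, p ≠ q → Λ < ω (j p).1 → Λ < ω (j q).1 →
      (j p).2 = !(j q).2)
    (hsmall : ∀ i, h * |truncFreq ω Λ (j i).1| ≤ K)
    (hsmall2 : ∃ T : Finset (Fin ℓ), T.card ≤ 2 ∧
      ∀ i ∉ T, h * |truncFreq ω Λ (j i).1| ≤ K / ((ℓ : ℝ) - 2)) :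
    2 * min (min γℓ γℓ1) γℓ2 / Real.pi * h * mu j ^ (-(max (max αℓ αℓ1) αℓ2)) ≤
      ‖Complex.exp ((h : ℂ) * (bigOmega (truncFreq ω Λ) j : ℂ) * Complex.I)
        - 1‖ :=
  discrete_small_divisor_estimate_general ω ℓ hℓ γℓ γℓ1 γℓ2 αℓ αℓ1 αℓ2 hγℓ hγℓ1 hγℓ2 hαℓ hresℓ
    hresℓ1 hresℓ2 h K Λ hh hKπ hω0 j hmom hA hbig hpair hsmall hsmall2
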